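/- Let x̂_prior ∈ 𝕏, let E1 be a feasible estimated trajectory over the window {0,…,M} with prior x̂_prior, MHE cost V1 and final state x̂_M ∈ 𝕏, and let E2 be a feasible estimated trajectory over the window {M,…,2M} with prior x̂_M whose MHE cost V2 satisfies V2 ≤ 2η^M‖x_M − x̂_M‖_{P2}² + 2·Σ_{j=1}^{M} η^{j−1}‖w_{2M−j}‖_Q² (the candidate cost of the true trajectory). Define the Lyapunov-like function values V_δ(M) := 2η^M·λ·W(x̂_prior, x_0) + V1 + 2·Σ_{j=1}^{M} η^{j−1}‖w_{M−j}‖_Q² and V_δ(2M) := 2η^M·λ·W(x̂_M, x_M) + V2 + 2·Σ_{j=1}^{M} η^{j−1}‖w_{2M−j}‖_Q². Then V_δ(2M) ≤ 4η^M·λ·V_δ(M) + 4·Σ_{j=1}^{M} η^{j−1}‖w_{2M−j}‖_Q². (Remark 2: the weighted sum of past δ-IOSS Lyapunov function, MHE value function and recent disturbances is an M-step Lyapunov-like function for MHE.) -/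

import Mathlib

open Matrix Finset

/-- Quadratic form `‖v‖_S² = vᵀ S v` associated with a square matrix `S`. -/
noncomputable def quadNorm {ι : Type*} [Fintype ι] (S : Matrix ι ι ℝ) (v : ι → ℝ) : ℝ :=
  v ⬝ᵥ S.mulVec v

lemma quadNorm_nonneg {ι : Type*} [Fintype ι] [DecidableEq ι] {S : Matrix ι ι ℝ}
    (hS : S.PosSemidef) (v : ι → ℝ) : 0 ≤ quadNorm S v := by
  have := hS.dotProduct_mulVec_nonneg v
  simpa [quadNorm] using this

lemma quadNorm_neg {ι : Type*} [Fintype ι] (S : Matrix ι ι ℝ) (v : ι → ℝ) :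
    quadNorm S (-v) = quadNorm S v := by
  simp [quadNorm, Matrix.mulVec_neg]

lemma quadNorm_sub_comm {ι : Type*} [Fintype ι] (S : Matrix ι ι ℝ) (a b : ι → ℝ) :
    quadNorm S (a - b) = quadNorm S (b - a) := by
  rw [← quadNorm_neg]; congr 1; abel

lemma quadNorm_par {ι : Type*} [Fintype ι] (S : Matrix ι ι ℝ) (a b : ι → ℝ) :
    quadNorm S (a + b) + quadNorm S (a - b) = 2 * quadNorm S a + 2 * quadNorm S b := by
  simp only [quadNorm, Matrix.mulVec_add, Matrix.mulVec_sub, dotProduct_add, dotProduct_sub,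
    add_dotProduct, sub_dotProduct]
  ring

lemma quadNorm_add_le {ι : Type*} [Fintype ι] [DecidableEq ι] {S : Matrix ι ι ℝ}
    (hS : S.PosSemidef) (a b : ι → ℝ) :
    quadNorm S (a + b) ≤ 2 * quadNorm S a + 2 * quadNorm S b := by
  have h1 := quadNorm_nonneg hS (a - b)
  have h2 := quadNorm_par S a b
  linarith

lemma quadNorm_sub_le {ι : Type*} [Fintype ι] [DecidableEq ι] {S : Matrix ι ι ℝ}
    (hS : S.PosSemidef) (a b : ι → ℝ) :
    quadNorm S (a - b) ≤ 2 * quadNorm S a + 2 * quadNorm S b := by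
  have := quadNorm_add_le hS a (-b)
  simpa [quadNorm_neg, sub_eq_add_neg] using this

lemma sum_range_eq_Icc (η : ℝ) (M : ℕ) (G : ℕ → ℝ) :
    ∑ i ∈ Finset.range M, η ^ (M - 1 - i) * G i
      = ∑ j ∈ Finset.Icc 1 M, η ^ (j - 1) * G (M - j) := by
  refine Finset.sum_nbij' (fun i => M - i) (fun j => M - j) ?_ ?_ ?_ ?_ ?_ <;>
    intros a ha <;> simp only [Finset.mem_range, Finset.mem_Icc] at * <;>
      first
        | omega
        | (have h1 : M - (M - a) = a := by omega
           have h2 : M - a - 1 = M - 1 - a := by omega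
           rw [h1, h2])

/-- Remark 2: the weighted sum of past δ-IOSS Lyapunov function,
MHE value function and recent disturbances is an M-step Lyapunov-like function for MHE. -/
theorem MHE_alternative_M_step_Lyapunov_like_function
    {n m q p : ℕ}
    (f : (Fin n → ℝ) → (Fin m → ℝ) → (Fin q → ℝ) → (Fin n → ℝ))
    (h : (Fin n → ℝ) → (Fin m → ℝ) → (Fin q → ℝ) → (Fin p → ℝ))
    (X : Set (Fin n → ℝ)) (U : Set (Fin m → ℝ)) (Wset : Set (Fin q → ℝ)) (Y : Set (Fin p → ℝ))
    (W : (Fin n → ℝ) → (Fin n → ℝ) → ℝ)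
    (P1 P2 : Matrix (Fin n) (Fin n) ℝ)
    (Q : Matrix (Fin q) (Fin q) ℝ) (R : Matrix (Fin p) (Fin p) ℝ)
    (η : ℝ) (hη0 : 0 ≤ η) (hη1 : η < 1)
    (hP1 : P1.PosDef) (hP2 : P2.PosDef) (hQ : Q.PosSemidef) (hR : R.PosSemidef)
    (hWlow : ∀ x xt, x ∈ X → xt ∈ X → quadNorm P1 (x - xt) ≤ W x xt)
    (hWup : ∀ x xt, x ∈ X → xt ∈ X → W x xt ≤ quadNorm P2 (x - xt))
    (hdiss : ∀ x xt u w wt, x ∈ X → xt ∈ X → u ∈ U → w ∈ Wset → wt ∈ Wset →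
      h x u w ∈ Y → h xt u wt ∈ Y →
      W (f x u w) (f xt u wt) ≤ η * W x xt + quadNorm Q (w - wt)
        + quadNorm R (h x u w - h xt u wt))
    -- horizon and true trajectory on {0, …, 2M}
    (M : ℕ) (hM : 1 ≤ M)
    (u : ℕ → Fin m → ℝ) (x : ℕ → Fin n → ℝ) (w : ℕ → Fin q → ℝ)
    (hu : ∀ j < 2 * M, u j ∈ U)
    (hx : ∀ j < 2 * M, x j ∈ X) (hw : ∀ j < 2 * M, w j ∈ Wset)
    (hdyn : ∀ j < 2 * M, x (j + 1) = f (x j) (u j) (w j))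
    (hy : ∀ j < 2 * M, h (x j) (u j) (w j) ∈ Y)
    (hxM : x M ∈ X) (hx2M : x (2 * M) ∈ X)
    -- prior estimate for the first window
    (xp : Fin n → ℝ) (hxp : xp ∈ X)
    -- E1: feasible estimated trajectory over the window {0, …, M} with prior xp
    (xh1 : ℕ → Fin n → ℝ) (wh1 : ℕ → Fin q → ℝ)
    (hxh1 : ∀ j < M, xh1 j ∈ X) (hwh1 : ∀ j < M, wh1 j ∈ Wset)
    (hdynh1 : ∀ j < M, xh1 (j + 1) = f (xh1 j) (u j) (wh1 j))
    (hyh1 : ∀ j < M, h (xh1 j) (u j) (wh1 j) ∈ Y)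
    (hxh1M : xh1 M ∈ X)
    (V1 : ℝ)
    (hV1 : V1 = 2 * η ^ M * quadNorm P2 (xh1 0 - xp)
      + ∑ j ∈ Finset.Icc 1 M, η ^ (j - 1) *
          (2 * quadNorm Q (wh1 (M - j))
            + quadNorm R (h (xh1 (M - j)) (u (M - j)) (wh1 (M - j))
                - h (x (M - j)) (u (M - j)) (w (M - j)))))
    -- E2: feasible estimated trajectory over the window {M, …, 2M} with prior xh1 M
    (xh2 : ℕ → Fin n → ℝ) (wh2 : ℕ → Fin q → ℝ)
    (hxh2 : ∀ j, M ≤ j → j < 2 * M → xh2 j ∈ X)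
    (hwh2 : ∀ j, M ≤ j → j < 2 * M → wh2 j ∈ Wset)
    (hdynh2 : ∀ j, M ≤ j → j < 2 * M → xh2 (j + 1) = f (xh2 j) (u j) (wh2 j))
    (hyh2 : ∀ j, M ≤ j → j < 2 * M → h (xh2 j) (u j) (wh2 j) ∈ Y)
    (hxh22M : xh2 (2 * M) ∈ X)
    (V2 : ℝ)
    (hV2 : V2 = 2 * η ^ M * quadNorm P2 (xh2 M - xh1 M)
      + ∑ j ∈ Finset.Icc 1 M, η ^ (j - 1) *
          (2 * quadNorm Q (wh2 (2 * M - j))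
            + quadNorm R (h (xh2 (2 * M - j)) (u (2 * M - j)) (wh2 (2 * M - j))
                - h (x (2 * M - j)) (u (2 * M - j)) (w (2 * M - j)))))
    -- V2 is at most the candidate cost of the true trajectory
    (hV2le : V2 ≤ 2 * η ^ M * quadNorm P2 (x M - xh1 M)
      + 2 * ∑ j ∈ Finset.Icc 1 M, η ^ (j - 1) * quadNorm Q (w (2 * M - j)))
    -- generalized-eigenvalue bound
    (lam : ℝ) (hlam0 : 0 ≤ lam)
    (hlam : ∀ v : Fin n → ℝ, quadNorm P2 v ≤ lam * quadNorm P1 v)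
    -- the Lyapunov-like function values
    (Vd1 Vd2 : ℝ)
    (hVd1 : Vd1 = 2 * η ^ M * lam * W xp (x 0) + V1
      + 2 * ∑ j ∈ Finset.Icc 1 M, η ^ (j - 1) * quadNorm Q (w (M - j)))
    (hVd2 : Vd2 = 2 * η ^ M * lam * W (xh1 M) (x M) + V2
      + 2 * ∑ j ∈ Finset.Icc 1 M, η ^ (j - 1) * quadNorm Q (w (2 * M - j))) :
    Vd2 ≤ 4 * η ^ M * lam * Vd1
      + 4 * ∑ j ∈ Finset.Icc 1 M, η ^ (j - 1) * quadNorm Q (w (2 * M - j)) := by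
  -- output mismatch along window 1
  set Δy : ℕ → ℝ := fun i =>
    quadNorm R (h (xh1 i) (u i) (wh1 i) - h (x i) (u i) (w i)) with hΔy
  set g : ℕ → ℝ := fun i => quadNorm Q (wh1 i - w i) + Δy i with hg
  -- M-step dissipation inequality along window 1
  have key : ∀ k, k ≤ M → W (xh1 k) (x k) ≤ η ^ k * W (xh1 0) (x 0)
      + ∑ i ∈ Finset.range k, η ^ (k - 1 - i) * g i := by
    intro k
    induction k with
    | zero => intro _; simp
    | succ k ih =>
      intro hk1
      have hkM : k < M := hk1
      have hstep : W (xh1 (k + 1)) (x (k + 1)) ≤ η * W (xh1 k) (x k) + g k := by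
        rw [hdynh1 k hkM, hdyn k (by omega)]
        have hd := hdiss (xh1 k) (x k) (u k) (wh1 k) (w k)
          (hxh1 k hkM) (hx k (by omega)) (hu k (by omega)) (hwh1 k hkM) (hw k (by omega))
          (hyh1 k hkM) (hy k (by omega))
        simp only [hg, hΔy]
        linarith
      have ihk := ih (le_of_lt hkM)
      have ihk' := mul_le_mul_of_nonneg_left ihk hη0
      calc W (xh1 (k + 1)) (x (k + 1)) ≤ η * W (xh1 k) (x k) + g k := hstep
        _ ≤ η * (η ^ k * W (xh1 0) (x 0) + ∑ i ∈ Finset.range k, η ^ (k - 1 - i) * g i)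
              + g k := by linarith
        _ = η ^ (k + 1) * W (xh1 0) (x 0)
              + ∑ i ∈ Finset.range (k + 1), η ^ (k + 1 - 1 - i) * g i := by
            rw [Finset.sum_range_succ, mul_add, Finset.mul_sum]
            have h1 : ∀ i ∈ Finset.range k,
                η * (η ^ (k - 1 - i) * g i) = η ^ (k + 1 - 1 - i) * g i := by
              intro i hi
              simp only [Finset.mem_range] at hi
              have e : k + 1 - 1 - i = (k - 1 - i) + 1 := by omega
              rw [e, pow_succ]; ring
            rw [Finset.sum_congr rfl h1]
            have e2 : k + 1 - 1 - k = 0 := by omega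
            rw [e2, pow_zero, pow_succ]
            ring
  have hkey := key M le_rfl
  have hx0 : x 0 ∈ X := hx 0 (by omega)
  have hxh10 : xh1 0 ∈ X := hxh1 0 (by omega)
  -- bound the discounted sum of g
  have hgsum : ∑ i ∈ Finset.range M, η ^ (M - 1 - i) * g i
      ≤ (∑ j ∈ Finset.Icc 1 M, η ^ (j - 1) *
          (2 * quadNorm Q (wh1 (M - j))
            + quadNorm R (h (xh1 (M - j)) (u (M - j)) (wh1 (M - j))
                - h (x (M - j)) (u (M - j)) (w (M - j)))))
        + 2 * ∑ j ∈ Finset.Icc 1 M, η ^ (j - 1) * quadNorm Q (w (M - j)) := by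
    rw [sum_range_eq_Icc η M g, Finset.mul_sum, ← Finset.sum_add_distrib]
    refine Finset.sum_le_sum ?_
    intro j hj
    have hpow : (0 : ℝ) ≤ η ^ (j - 1) := pow_nonneg hη0 _
    have hqq : quadNorm Q (wh1 (M - j) - w (M - j))
        ≤ 2 * quadNorm Q (wh1 (M - j)) + 2 * quadNorm Q (w (M - j)) :=
      quadNorm_sub_le hQ _ _
    have : g (M - j) ≤ (2 * quadNorm Q (wh1 (M - j))
        + quadNorm R (h (xh1 (M - j)) (u (M - j)) (wh1 (M - j))
            - h (x (M - j)) (u (M - j)) (w (M - j))))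
        + 2 * quadNorm Q (w (M - j)) := by
      simp only [hg, hΔy]; linarith
    nlinarith [this, hpow]
  -- bound the initial term
  have hW0 : W (xh1 0) (x 0) ≤ 2 * quadNorm P2 (xh1 0 - xp) + 2 * lam * W xp (x 0) := by
    have h1 : W (xh1 0) (x 0) ≤ quadNorm P2 (xh1 0 - x 0) := hWup _ _ hxh10 hx0
    have h2 : quadNorm P2 (xh1 0 - x 0)
        ≤ 2 * quadNorm P2 (xh1 0 - xp) + 2 * quadNorm P2 (xp - x 0) := by
      have := quadNorm_add_le hP2.posSemidef (xh1 0 - xp) (xp - x 0)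
      rw [sub_add_sub_cancel] at this
      exact this
    have h3 : quadNorm P2 (xp - x 0) ≤ lam * W xp (x 0) :=
      le_trans (hlam _) (mul_le_mul_of_nonneg_left (hWlow xp (x 0) hxp hx0) hlam0)
    linarith
  have hηM : (0 : ℝ) ≤ η ^ M := pow_nonneg hη0 M
  -- W (xh1 M) (x M) ≤ Vd1
  have hWM : W (xh1 M) (x M) ≤ Vd1 := by
    rw [hVd1, hV1]
    have h5 := mul_le_mul_of_nonneg_left hW0 hηM
    linarith [hkey, hgsum, h5]
  -- final assembly
  have h4 : quadNorm P2 (x M - xh1 M) ≤ lam * W (xh1 M) (x M) := by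
    rw [quadNorm_sub_comm]
    exact le_trans (hlam _) (mul_le_mul_of_nonneg_left (hWlow _ _ hxh1M hxM) hlam0)
  have h6 := mul_le_mul_of_nonneg_left h4 hηM
  have h7 : 4 * η ^ M * lam * W (xh1 M) (x M) ≤ 4 * η ^ M * lam * Vd1 :=
    mul_le_mul_of_nonneg_left hWM (by positivity)
  rw [hVd2]
  linarith [hV2le, h6, h7]
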